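/- Let A(τ,σ) = 1/2 + Σ_{ι=0}^{N₁} ξ_{ι+1} P_{ι+1}(τ)P_ι(σ) − Σ_{ι=0}^{N₂} ξ_{ι+1} P_{ι+1}(σ)P_ι(τ), with ξ_ι = 1/(2√(4ι²−1)). Then A satisfies the simplifying condition C̆(α) with α = min(N₁+1, N₂+2): ∫₀¹ A(τ,σ) σ^{κ−1} dσ = τ^κ/κ for κ = 1,…,α and all τ ∈ [0,1]. -/

import Mathlib

/-- The ι-th normalized shifted Legendre polynomial on [0,1], via Rodrigues' formula. -/
noncomputable def legP (ι : ℕ) (x : ℝ) : ℝ :=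
  (Real.sqrt (2 * ι + 1) / (Nat.factorial ι)) *
    iteratedDeriv ι (fun y : ℝ => y ^ ι * (y - 1) ^ ι) x

/-- ξ_ι = 1/(2√(4ι²-1)). -/
noncomputable def legXi (ι : ℕ) : ℝ := 1 / (2 * Real.sqrt (4 * (ι : ℝ) ^ 2 - 1))

/-!
The polynomials `P_j` are orthonormal on `[0,1]`: in Rodrigues' form `P_j ∝ Dʲ (x(x-1))ʲ`,
`j`-fold integration by parts moves all derivatives onto the other factor without boundary terms.
From `D² uⁿ⁺² = (n+2)((4n+6) uⁿ⁺¹ + (n+1) uⁿ)` for `u = x(x-1)` one gets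
`∫₀ˣ P_j = ξ_{j+1} P_{j+1}(x) - ξ_j P_{j-1}(x)` (and `ξ₁ P₁(x) + 1/2` for `j = 0`).
By orthonormality, integrating `A(τ,σ) P_j(σ)` over `σ` keeps exactly the terms of this
antiderivative at `τ`, provided `j ≤ N₁` and `j ≤ N₂ + 1`. Since `P_0, …, P_{α-1}` span the
polynomials of degree `< α`, this gives `∫₀¹ A(τ,σ) q(σ) dσ = ∫₀^τ q` for all of them, in
particular for `q = σ^(κ-1)`.
-/

open Polynomial intervalIntegral Nat

noncomputable def polyIntegral (a b : ℝ) : ℝ[X] →ₗ[ℝ] ℝ where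
  toFun q := ∫ x in a..b, q.eval x
  map_add' p q := by
    simp only [eval_add]
    exact integral_add (p.continuous.intervalIntegrable _ _) (q.continuous.intervalIntegrable _ _)
  map_smul' c q := by
    simp only [eval_smul, smul_eq_mul, RingHom.id_apply]
    exact integral_const_mul c _

theorem polyIntegral_apply (a b : ℝ) (q : ℝ[X]) :
    polyIntegral a b q = ∫ x in a..b, q.eval x :=
  rfl

theorem polyIntegral_C_mul (a b c : ℝ) (q : ℝ[X]) :
    polyIntegral a b (C c * q) = c * polyIntegral a b q := by
  rw [← smul_eq_C_mul, map_smul, smul_eq_mul]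

theorem polyIntegral_X_pow (n : ℕ) : polyIntegral 0 1 (X ^ n) = 1 / (n + 1) := by
  simp [polyIntegral_apply, integral_pow]

theorem polyIntegral_derivative (a b : ℝ) (p : ℝ[X]) :
    polyIntegral a b (derivative p) = p.eval b - p.eval a :=
  integral_eq_sub_of_hasDerivAt (fun x _ => p.hasDerivAt x)
    ((derivative p).continuous.intervalIntegrable _ _)

theorem polyIntegral_derivative_mul (a b : ℝ) (g q : ℝ[X]) :
    polyIntegral a b (derivative g * q) =
      (g * q).eval b - (g * q).eval a - polyIntegral a b (g * derivative q) := by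
  rw [eq_sub_iff_add_eq, ← map_add, ← derivative_mul, polyIntegral_derivative]

theorem polyIntegral_iterate_derivative_mul (a b : ℝ) (g q : ℝ[X]) (m : ℕ)
    (hbdry : ∀ i j, i + j + 1 = m →
      (derivative^[i] g * derivative^[j] q).eval a = 0 ∧
        (derivative^[i] g * derivative^[j] q).eval b = 0) :
    polyIntegral a b (derivative^[m] g * q) =
      (-1) ^ m * polyIntegral a b (g * derivative^[m] q) := by
  induction m generalizing q with
  | zero => simp
  | succ m ih =>
    obtain ⟨ha, hb⟩ := hbdry m 0 rfl
    simp only [Function.iterate_zero_apply] at ha hb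
    rw [Function.iterate_succ_apply', polyIntegral_derivative_mul, ha, hb,
      ih (derivative q) fun i j hij => hbdry i (j + 1) (by omega), ← Function.iterate_succ_apply]
    ring

theorem iterate_derivative_natDegree_of_monic {R : Type*} [Semiring R] {p : R[X]}
    (hp : p.Monic) : derivative^[p.natDegree] p = C (p.natDegree ! : R) := by
  have h : (derivative^[p.natDegree] p).natDegree = 0 := by
    simpa using natDegree_iterate_derivative p p.natDegree
  rw [eq_C_of_natDegree_eq_zero h, coeff_iterate_derivative, zero_add, descFactorial_self,
    ← leadingCoeff, hp.leadingCoeff, nsmul_one]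

theorem eval_iterate_derivative_pow_eq_zero {R : Type*} [CommSemiring R] {p : R[X]} {a : R}
    (ha : p.IsRoot a) {n i : ℕ} (hi : i < n) : (derivative^[i] (p ^ n)).eval a = 0 := by
  obtain ⟨r, hr⟩ := pow_sub_dvd_iterate_derivative_pow p n i
  rw [hr, eval_mul, eval_pow, ha.eq_zero, zero_pow (by omega), zero_mul]

theorem iteratedDeriv_eval {𝕜 : Type*} [NontriviallyNormedField 𝕜] (n : ℕ) (q : 𝕜[X]) :
    iteratedDeriv n (fun x => q.eval x) = fun x => (derivative^[n] q).eval x := by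
  induction n generalizing q with
  | zero => simp
  | succ n ih =>
    rw [iteratedDeriv_succ', funext fun x => q.deriv (x := x), ih, Function.iterate_succ_apply]

noncomputable def rodrigues (n : ℕ) : ℝ[X] := derivative^[n] ((X * (X - 1)) ^ n)

theorem rodrigues_eq_shiftedLegendre (n : ℕ) :
    rodrigues n = C ((-1) ^ n * n ! : ℝ) * (shiftedLegendre n).map (Int.castRingHom ℝ) := by
  have h := congrArg (map (Int.castRingHom ℝ)) (factorial_mul_shiftedLegendre_eq n)
  simp only [Polynomial.map_mul, ← iterate_derivative_map, Polynomial.map_pow, map_X,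
    Polynomial.map_sub, Polynomial.map_one, Polynomial.map_natCast] at h
  have hu : (X * (X - 1) : ℝ[X]) ^ n = C ((-1) ^ n) * (X ^ n * (1 - X) ^ n) := by
    rw [C_pow, C_neg, C_1, ← mul_pow, ← mul_pow]
    ring
  rw [rodrigues, hu, iterate_derivative_C_mul, ← h, C_mul, mul_assoc, ← map_natCast C]

theorem degree_rodrigues (n : ℕ) : (rodrigues n).degree = n := by
  rw [rodrigues_eq_shiftedLegendre, degree_C_mul (by positivity),
    degree_map_eq_of_injective (RingHom.injective_int _), degree_shiftedLegendre]

theorem rodrigues_eval_zero (n : ℕ) : (rodrigues n).eval 0 = (-1) ^ n * n ! := by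
  rw [rodrigues_eq_shiftedLegendre, eval_mul, eval_C, eval_map, eval₂_at_zero,
    coeff_shiftedLegendre]
  simp

theorem polyIntegral_rodrigues_mul (n : ℕ) (q : ℝ[X]) :
    polyIntegral 0 1 (rodrigues n * q) =
      (-1) ^ n * polyIntegral 0 1 ((X * (X - 1)) ^ n * derivative^[n] q) := by
  refine polyIntegral_iterate_derivative_mul 0 1 _ q n fun i j hij => ?_
  simp only [eval_mul]
  constructor <;> rw [eval_iterate_derivative_pow_eq_zero (by simp) (by omega), zero_mul]

theorem polyIntegral_rodrigues_mul_of_natDegree_lt {n : ℕ} {q : ℝ[X]} (hq : q.natDegree < n) :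
    polyIntegral 0 1 (rodrigues n * q) = 0 := by
  rw [polyIntegral_rodrigues_mul, iterate_derivative_eq_zero hq, mul_zero, map_zero, mul_zero]

theorem polyIntegral_X_mul_X_sub_one_pow (n : ℕ) :
    polyIntegral 0 1 ((X * (X - 1)) ^ n) = (-1) ^ n * n ! ^ 2 / (2 * n + 1) ! := by
  -- integrate by parts `n` times, moving the derivatives from `X ^ (2 n)` onto `(X - 1) ^ n`
  have hibp := polyIntegral_iterate_derivative_mul 0 1 (X ^ (2 * n)) ((X - C 1) ^ n) n
    fun i j hij => by
      simp only [eval_mul]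
      refine ⟨?_, ?_⟩
      · rw [eval_iterate_derivative_pow_eq_zero (p := X) (by simp) (by omega), zero_mul]
      · rw [eval_iterate_derivative_pow_eq_zero (p := X - C 1) (by simp) (by omega), mul_zero]
  rw [iterate_derivative_X_pow_eq_C_mul, iterate_derivative_X_sub_pow_self, mul_assoc,
    polyIntegral_C_mul, mul_comm (X ^ (2 * n)), ← map_natCast C, polyIntegral_C_mul,
    polyIntegral_X_pow, show 2 * n - n = n by omega, ← mul_pow, C_1] at hibp
  have hfac : ((2 * n + 1) ! : ℝ) = (2 * n + 1) * (2 * n).descFactorial n * n ! := by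
    rw [factorial_succ, ← factorial_mul_descFactorial (show n ≤ 2 * n by omega),
      show 2 * n - n = n by omega]
    push_cast
    ring
  have hd : ((2 * n).descFactorial n : ℝ) ≠ 0 := by
    exact_mod_cast (descFactorial_pos.mpr (by omega)).ne'
  push_cast at hibp
  field_simp at hibp
  rw [hfac]
  field_simp
  linear_combination hibp

theorem polyIntegral_rodrigues_mul_self (n : ℕ) :
    polyIntegral 0 1 (rodrigues n * rodrigues n) = n ! ^ 2 / (2 * n + 1) := by
  have hX1 : (X - 1 : ℝ[X]).Monic := by simpa using monic_X_sub_C (1 : ℝ)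
  have hmonic : ((X * (X - 1)) ^ n : ℝ[X]).Monic := (monic_X.mul hX1).pow n
  have hdeg : ((X * (X - 1)) ^ n : ℝ[X]).natDegree = 2 * n := by
    rw [(monic_X.mul hX1).natDegree_pow, monic_X.natDegree_mul hX1, natDegree_X,
      show (X - 1 : ℝ[X]) = X - C 1 by rw [C_1], natDegree_X_sub_C]
    ring
  have htop : derivative^[n] (rodrigues n) = C ((2 * n) ! : ℝ) := by
    rw [rodrigues, ← Function.iterate_add_apply, ← two_mul, ← hdeg,
      iterate_derivative_natDegree_of_monic hmonic]
  rw [polyIntegral_rodrigues_mul, htop, mul_comm _ (C _), polyIntegral_C_mul,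
    polyIntegral_X_mul_X_sub_one_pow, factorial_succ]
  push_cast
  field_simp
  rw [← pow_mul, mul_comm, (even_two_mul n).neg_one_pow]

theorem derivative_rodrigues_add_two (n : ℕ) :
    derivative (rodrigues (n + 2)) =
      C ((n + 2) * (4 * n + 6) : ℝ) * rodrigues (n + 1) +
        C ((n + 1) * (n + 2) : ℝ) * derivative (rodrigues n) := by
  set u : ℝ[X] := X * (X - 1)
  have hu : derivative u = 2 * X - 1 := by
    simp only [u, derivative_mul, derivative_X, derivative_sub, derivative_one]; ring
  have hu' : derivative (2 * X - 1 : ℝ[X]) = 2 := by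
    rw [derivative_sub, derivative_mul, derivative_X, derivative_one, derivative_ofNat]; ring
  -- `u' ^ 2 = 4 u + 1` is what makes the second derivative of `u ^ (n + 2)` close up
  have h : derivative^[2] (u ^ (n + 2)) =
      C ((n + 2) * (4 * n + 6) : ℝ) * u ^ (n + 1) + C ((n + 1) * (n + 2) : ℝ) * u ^ n := by
    rw [Function.iterate_succ_apply, Function.iterate_one, derivative_pow_succ, hu,
      derivative_mul, derivative_mul, derivative_C, derivative_pow_succ, hu, hu']
    simp only [map_mul, map_add, map_natCast, map_ofNat, C_1, u]
    push_cast
    ring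
  rw [rodrigues, ← Function.iterate_succ_apply' derivative, show (n + 2).succ = n + 1 + 2 by omega,
    Function.iterate_add_apply, h, iterate_map_add, iterate_derivative_C_mul,
    iterate_derivative_C_mul]
  simp only [rodrigues, u, Function.iterate_succ_apply']

noncomputable def legendre (n : ℕ) : ℝ[X] := C (√(2 * n + 1) / n !) * rodrigues n

theorem legP_eq_eval (n : ℕ) (x : ℝ) : legP n x = (legendre n).eval x := by
  have h : (fun y : ℝ => y ^ n * (y - 1) ^ n) = fun y => ((X * (X - 1) : ℝ[X]) ^ n).eval y := by
    simp [mul_pow]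
  rw [legP, h, iteratedDeriv_eval, legendre, eval_mul, eval_C, rodrigues]

theorem legendre_zero : legendre 0 = 1 := by simp [legendre, rodrigues]

theorem degree_legendre (n : ℕ) : (legendre n).degree = n := by
  rw [legendre, degree_C_mul (by positivity), degree_rodrigues]

theorem natDegree_legendre (n : ℕ) : (legendre n).natDegree = n :=
  natDegree_eq_of_degree_eq_some (degree_legendre n)

theorem legendre_eval_zero (n : ℕ) : (legendre n).eval 0 = (-1) ^ n * √(2 * n + 1) := by
  rw [legendre, eval_mul, eval_C, rodrigues_eval_zero]
  field_simp

theorem polyIntegral_legendre_mul_legendre (i j : ℕ) :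
    polyIntegral 0 1 (legendre i * legendre j) = if i = j then 1 else 0 := by
  split_ifs with hij
  · subst hij
    have hsq : √(2 * i + 1) * √(2 * i + 1) = (2 * i + 1 : ℝ) := Real.mul_self_sqrt (by positivity)
    rw [legendre, mul_mul_mul_comm, ← C_mul, polyIntegral_C_mul, polyIntegral_rodrigues_mul_self]
    field_simp
    linear_combination hsq
  · wlog hlt : j < i generalizing i j
    · rw [mul_comm]; exact this j i (Ne.symm hij) (by omega)
    rw [legendre, mul_assoc, polyIntegral_C_mul, polyIntegral_rodrigues_mul_of_natDegree_lt
      (by rwa [natDegree_legendre]), mul_zero]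

theorem legXi_succ (n : ℕ) : legXi (n + 1) = 1 / (2 * √(2 * n + 1) * √(2 * n + 3)) := by
  rw [legXi, mul_assoc, ← Real.sqrt_mul (by positivity)]
  congr 3
  push_cast
  ring

theorem legXi_one_mul_sqrt_three : legXi 1 * √3 = 1 / 2 := by
  have h := legXi_succ 0
  norm_num at h
  rw [h]
  field_simp

theorem derivative_legendre_add_two_sub (n : ℕ) :
    derivative (C (legXi (n + 2)) * legendre (n + 2) - C (legXi (n + 1)) * legendre n) =
      legendre (n + 1) := by
  have hξ : legXi (n + 2) = 1 / (2 * √(2 * n + 3) * √(2 * n + 5)) := by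
    rw [legXi_succ (n + 1)]; push_cast; ring_nf
  have hsq3 : √(2 * n + 3) * √(2 * n + 3) = (2 * n + 3 : ℝ) := Real.mul_self_sqrt (by positivity)
  have hs1 : √(2 * n + 1) ≠ 0 := by positivity
  have hs5 : √(2 * n + 5) ≠ 0 := by positivity
  have hfac1 : ((n + 1)! : ℝ) = (n + 1) * n ! := by push_cast [factorial_succ]; ring
  have hfac2 : ((n + 2)! : ℝ) = (n + 2) * (n + 1) * n ! := by push_cast [factorial_succ]; ring
  have h1 : 1 / (2 * √(2 * n + 3) * √(2 * n + 5)) * (√(2 * n + 5) / (n + 2)!) *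
      ((n + 2) * (4 * n + 6)) = √(2 * n + 3) / (n + 1)! := by
    rw [hfac1, hfac2]
    field_simp
    linear_combination (-2 : ℝ) * hsq3
  have h2 : 1 / (2 * √(2 * n + 3) * √(2 * n + 5)) * (√(2 * n + 5) / (n + 2)!) *
      ((n + 1) * (n + 2)) = 1 / (2 * √(2 * n + 1) * √(2 * n + 3)) * (√(2 * n + 1) / n !) := by
    rw [hfac2]
    field_simp
  simp only [legendre, derivative_sub, derivative_mul, derivative_C, zero_mul, zero_add,
    derivative_rodrigues_add_two, hξ, legXi_succ]
  simp only [← smul_eq_C_mul, smul_add]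
  rw [show 2 * ((n + 2 : ℕ) : ℝ) + 1 = 2 * n + 5 by push_cast; ring,
    show 2 * ((n + 1 : ℕ) : ℝ) + 1 = 2 * n + 3 by push_cast; ring]
  linear_combination (norm := module) h1 • rodrigues (n + 1) + h2 • derivative (rodrigues n)

noncomputable def legendreAntideriv : ℕ → ℝ[X]
  | 0 => C (legXi 1) * legendre 1 + C (1 / 2) * legendre 0
  | n + 1 => C (legXi (n + 2)) * legendre (n + 2) - C (legXi (n + 1)) * legendre n

theorem derivative_legendreAntideriv (n : ℕ) :
    derivative (legendreAntideriv n) = legendre n := by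
  cases n with
  | zero =>
    have hR : derivative (rodrigues 1) = 2 := by
      simp only [rodrigues, pow_one, Function.iterate_one, derivative_mul, derivative_X,
        derivative_sub, derivative_one, derivative_add, derivative_zero]
      ring
    rw [legendreAntideriv, legendre_zero, mul_one, derivative_add, derivative_C, add_zero,
      derivative_C_mul, legendre, derivative_C_mul, hR, ← mul_assoc, ← C_mul, ← map_ofNat C 2,
      ← C_mul, ← C_1]
    congr 1
    norm_num
    linear_combination 2 * legXi_one_mul_sqrt_three
  | succ n => exact derivative_legendre_add_two_sub n

theorem legendreAntideriv_eval_zero (n : ℕ) : (legendreAntideriv n).eval 0 = 0 := by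
  cases n with
  | zero =>
    simp only [legendreAntideriv, eval_add, eval_mul, eval_C, legendre_eval_zero]
    norm_num
    linear_combination - legXi_one_mul_sqrt_three
  | succ n =>
    simp only [legendreAntideriv, eval_sub, eval_mul, eval_C, legendre_eval_zero, legXi_succ]
    rw [show 2 * ((n + 1 : ℕ) : ℝ) + 1 = 2 * n + 3 by push_cast; ring,
      show 2 * ((n + 1 : ℕ) : ℝ) + 3 = 2 * n + 5 by push_cast; ring,
      show 2 * ((n + 2 : ℕ) : ℝ) + 1 = 2 * n + 5 by push_cast; ring, pow_add]
    have hs1 : √(2 * n + 1) ≠ 0 := by positivity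
    have hs5 : √(2 * n + 5) ≠ 0 := by positivity
    field_simp
    ring

theorem polyIntegral_legendre (τ : ℝ) (n : ℕ) :
    polyIntegral 0 τ (legendre n) = (legendreAntideriv n).eval τ := by
  rw [← derivative_legendreAntideriv, polyIntegral_derivative, legendreAntideriv_eval_zero,
    sub_zero]

noncomputable def legendreSequence : Polynomial.Sequence ℝ := ⟨legendre, degree_legendre⟩

theorem mem_span_legendre {m : ℕ} {q : ℝ[X]} (hq : q.degree < m) :
    q ∈ Submodule.span ℝ (legendre '' Set.Iio m) := by
  rw [show legendre = ⇑legendreSequence from rfl, legendreSequence.span_degreeLT fun i _ =>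
    (leadingCoeff_ne_zero.mpr (legendreSequence.ne_zero i)).isUnit]
  exact mem_degreeLT.mpr hq

noncomputable def kernelPoly (N₁ N₂ : ℕ) (τ : ℝ) : ℝ[X] :=
  C (1 / 2) + ∑ ι ∈ Finset.range (N₁ + 1), C (legXi (ι + 1) * legP (ι + 1) τ) * legendre ι
    - ∑ ι ∈ Finset.range (N₂ + 1), C (legXi (ι + 1) * legP ι τ) * legendre (ι + 1)

theorem eval_kernelPoly (N₁ N₂ : ℕ) (τ σ : ℝ) : (kernelPoly N₁ N₂ τ).eval σ = 1 / 2
      + ∑ ι ∈ Finset.range (N₁ + 1), legXi (ι + 1) * legP (ι + 1) τ * legP ι σ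
      - ∑ ι ∈ Finset.range (N₂ + 1), legXi (ι + 1) * legP (ι + 1) σ * legP ι τ := by
  simp only [kernelPoly, eval_add, eval_sub, eval_C, eval_finsetSum, eval_mul, legP_eq_eval]
  congr 2 with ι
  ring

theorem polyIntegral_kernelPoly_mul_legendre {N₁ N₂ j : ℕ} (h₁ : j ≤ N₁) (h₂ : j ≤ N₂ + 1)
    (τ : ℝ) :
    polyIntegral 0 1 (kernelPoly N₁ N₂ τ * legendre j) = (legendreAntideriv j).eval τ := by
  have hconst : polyIntegral 0 1 (C (1 / 2) * legendre j) = 1 / 2 * if 0 = j then 1 else 0 := by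
    rw [polyIntegral_C_mul, ← polyIntegral_legendre_mul_legendre, legendre_zero, one_mul]
  rw [kernelPoly, sub_mul, add_mul, Finset.sum_mul, Finset.sum_mul, map_sub, map_add, map_sum,
    map_sum, hconst]
  simp only [mul_assoc, polyIntegral_C_mul, polyIntegral_legendre_mul_legendre]
  cases j with
  | zero => simp [legendreAntideriv, legP_eq_eval, legendre_zero, add_comm]
  | succ n =>
    simp [legendreAntideriv, legP_eq_eval, show n < N₁ by omega, show n ≤ N₂ by omega]

theorem polyIntegral_kernelPoly_mul {N₁ N₂ : ℕ} {q : ℝ[X]}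
    (hq : q.degree < ↑(min (N₁ + 1) (N₂ + 2))) (τ : ℝ) :
    polyIntegral 0 1 (kernelPoly N₁ N₂ τ * q) = polyIntegral 0 τ q := by
  refine LinearMap.eqOn_span (f := polyIntegral 0 1 ∘ₗ LinearMap.mulLeft ℝ (kernelPoly N₁ N₂ τ))
    (g := polyIntegral 0 τ) ?_ (mem_span_legendre hq)
  rintro _ ⟨j, hj, rfl⟩
  rw [Set.mem_Iio, lt_min_iff] at hj
  rw [LinearMap.comp_apply, LinearMap.mulLeft_apply, polyIntegral_legendre,
    polyIntegral_kernelPoly_mul_legendre (by omega) (by omega)]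

/-- The coefficient A(τ,σ) = 1/2 + Σ_{ι=0}^{N₁} ξ_{ι+1}P_{ι+1}(τ)P_ι(σ)
− Σ_{ι=0}^{N₂} ξ_{ι+1}P_{ι+1}(σ)P_ι(τ) satisfies the simplifying condition
C̆(α) with α = min(N₁+1, N₂+2): ∫₀¹ A(τ,σ) σ^{κ−1} dσ = τ^κ/κ for 1 ≤ κ ≤ α. -/
theorem simplifying_condition_C
    (N₁ N₂ : ℕ)
    (A : ℝ → ℝ → ℝ)
    (hA : ∀ τ σ : ℝ, A τ σ = 1 / 2
      + ∑ ι ∈ Finset.range (N₁ + 1), legXi (ι + 1) * legP (ι + 1) τ * legP ι σ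
      - ∑ ι ∈ Finset.range (N₂ + 1), legXi (ι + 1) * legP (ι + 1) σ * legP ι τ) :
    ∀ κ : ℕ, 1 ≤ κ → κ ≤ min (N₁ + 1) (N₂ + 2) →
      ∀ τ ∈ Set.Icc (0:ℝ) 1,
        ∫ σ in (0:ℝ)..1, A τ σ * σ ^ (κ - 1) = τ ^ κ / κ := by
  intro κ hκ₁ hκ τ _
  obtain ⟨k, rfl⟩ : ∃ k, κ = k + 1 := ⟨κ - 1, by omega⟩
  have hdeg : (X ^ k : ℝ[X]).degree < ↑(min (N₁ + 1) (N₂ + 2)) := by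
    rw [degree_X_pow]; exact_mod_cast hκ
  have h := polyIntegral_kernelPoly_mul hdeg τ
  simp only [polyIntegral_apply, eval_mul, eval_kernelPoly, ← hA, eval_pow, eval_X,
    integral_pow] at h
  rw [Nat.add_sub_cancel, h]
  push_cast
  ring
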